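/- arXiv:1403.7472 — 7 statements merged into one kernel-verified Lean document; each statement's English description precedes it below -/
import Mathlib

section
/- For positive definite n×n complex matrices A, B and any real y, Re Tr(A^{1/2+iy} B^{1/2+iy} A^{1/2-iy} B^{1/2-iy}) ≤ Tr(AB). -/
open Matrix Complex
open scoped ComplexOrder

/-- Real power of a (Hermitian, intended positive semidefinite) matrix via the spectral
decomposition; junk value `A` if `A` is not Hermitian. -/
noncomputable def Matrix.mpow {n : ℕ} (A : Matrix (Fin n) (Fin n) ℂ) (t : ℝ) :
    Matrix (Fin n) (Fin n) ℂ :=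
  if hA : A.IsHermitian then
    (hA.eigenvectorUnitary : Matrix (Fin n) (Fin n) ℂ) *
      Matrix.diagonal (fun i => ((hA.eigenvalues i ^ t : ℝ) : ℂ)) *
      (star (hA.eigenvectorUnitary : Matrix (Fin n) (Fin n) ℂ))
  else A

/-- Complex power `A ^ z = exp (z log A)` of a (Hermitian, intended positive definite) matrix via
the spectral decomposition; junk value `A` if `A` is not Hermitian. -/
noncomputable def Matrix.mcpow {n : ℕ} (A : Matrix (Fin n) (Fin n) ℂ) (z : ℂ) :
    Matrix (Fin n) (Fin n) ℂ :=
  if hA : A.IsHermitian then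
    (hA.eigenvectorUnitary : Matrix (Fin n) (Fin n) ℂ) *
      Matrix.diagonal (fun i => Complex.exp (z * Real.log (hA.eigenvalues i))) *
      (star (hA.eigenvectorUnitary : Matrix (Fin n) (Fin n) ℂ))
  else A

/-- Schatten `r`-norm of a matrix: `(∑ sᵢ(X)^r)^(1/r)`, where the `sᵢ(X)` are the singular
values, i.e. the square roots of the eigenvalues of `Xᴴ * X`. -/
noncomputable def Matrix.schatten {n : ℕ} (r : ℝ) (X : Matrix (Fin n) (Fin n) ℂ) : ℝ :=
  (∑ i, ((Matrix.posSemidef_conjTranspose_mul_self X).1.eigenvalues i) ^ (r / 2)) ^ (1 / r)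

/-- Frobenius (Hilbert–Schmidt) norm of a matrix. -/
noncomputable def Matrix.frob {n : ℕ} (X : Matrix (Fin n) (Fin n) ℂ) : ℝ :=
  Real.sqrt (Xᴴ * X).trace.re

/-- Operator (spectral) norm of a matrix. -/
noncomputable def Matrix.opNorm {n : ℕ} (X : Matrix (Fin n) (Fin n) ℂ) : ℝ :=
  ‖Matrix.toEuclideanCLM (𝕜 := ℂ) X‖

/-- Smallest singular value of a matrix. -/
noncomputable def Matrix.sMin {n : ℕ} (X : Matrix (Fin n) (Fin n) ℂ) : ℝ :=
  ⨅ i, Real.sqrt ((Matrix.posSemidef_conjTranspose_mul_self X).1.eigenvalues i)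

/-!
With `c = 1/2 - iy`, so that `c̄ = 1/2 + iy` and `c + c̄ = 1`, put `X = B^c A^c` and
`Y = A^c B^c`. Then the trace on the left is `Tr (Xᴴ Y)`, while
`Tr (Xᴴ X) = Tr (A^c̄ B A^c) = Tr (AB)` and likewise `Tr (Yᴴ Y) = Tr (AB)`.
The claim then follows from `2 Re Tr (Xᴴ Y) ≤ Tr (Xᴴ X) + Tr (Yᴴ Y)`, which is
`Tr ((X - Y)ᴴ (X - Y)) ≥ 0`.
-/

namespace Matrix

theorem re_trace_conjTranspose_mul_le {𝕜 m n : Type*} [RCLike 𝕜] [Fintype m]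
    [Fintype n] (X Y : Matrix m n 𝕜) :
    RCLike.re (Xᴴ * Y).trace ≤ (RCLike.re (Xᴴ * X).trace + RCLike.re (Yᴴ * Y).trace) / 2 := by
  have hnonneg := RCLike.nonneg_iff.mp (posSemidef_conjTranspose_mul_self (X - Y)).trace_nonneg
  have hswap : (Yᴴ * X).trace = star (Xᴴ * Y).trace := by
    rw [← trace_conjTranspose, conjTranspose_mul, conjTranspose_conjTranspose]
  simp only [conjTranspose_sub, Matrix.sub_mul, Matrix.mul_sub, trace_sub, map_sub, hswap,
    RCLike.star_def, RCLike.conj_re] at hnonneg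
  linarith [hnonneg.1]

variable {n : ℕ} {A B : Matrix (Fin n) (Fin n) ℂ}

theorem IsHermitian.conjTranspose_mcpow (hA : A.IsHermitian) (z : ℂ) :
    (A.mcpow z)ᴴ = A.mcpow (starRingEnd ℂ z) := by
  have hdiag : (star fun i => Complex.exp (z * Real.log (hA.eigenvalues i))) =
      fun i => Complex.exp (starRingEnd ℂ z * Real.log (hA.eigenvalues i)) := by
    funext i
    simp only [Pi.star_apply, Complex.star_def, ← Complex.exp_conj, map_mul, Complex.conj_ofReal]
  rw [mcpow, mcpow, dif_pos hA, dif_pos hA, conjTranspose_mul, conjTranspose_mul,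
    diagonal_conjTranspose, hdiag]
  simp only [star_eq_conjTranspose, conjTranspose_conjTranspose, Matrix.mul_assoc]

theorem IsHermitian.mcpow_mul_mcpow (hA : A.IsHermitian) (z w : ℂ) :
    A.mcpow z * A.mcpow w = A.mcpow (z + w) := by
  have hU : ∀ X : Matrix (Fin n) (Fin n) ℂ,
      star (hA.eigenvectorUnitary : Matrix (Fin n) (Fin n) ℂ) *
        ((hA.eigenvectorUnitary : Matrix (Fin n) (Fin n) ℂ) * X) = X := fun X => by
    rw [← Matrix.mul_assoc, Unitary.coe_star_mul_self, Matrix.one_mul]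
  have hdiag : (fun i => Complex.exp (z * Real.log (hA.eigenvalues i)) *
      Complex.exp (w * Real.log (hA.eigenvalues i))) =
      fun i => Complex.exp ((z + w) * Real.log (hA.eigenvalues i)) := by
    funext i
    rw [← Complex.exp_add, add_mul]
  rw [mcpow, mcpow, mcpow, dif_pos hA, dif_pos hA, dif_pos hA]
  simp only [Matrix.mul_assoc, hU]
  rw [← Matrix.mul_assoc (diagonal _), diagonal_mul_diagonal, hdiag]

theorem PosDef.mcpow_one (hA : A.PosDef) : A.mcpow 1 = A := by
  have hdiag : (fun i => Complex.exp (1 * Real.log (hA.1.eigenvalues i))) =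
      RCLike.ofReal ∘ hA.1.eigenvalues := by
    funext i
    rw [one_mul, ← Complex.ofReal_exp, Real.exp_log (hA.eigenvalues_pos i)]
    rfl
  have hspectral := hA.1.spectral_theorem
  rw [Unitary.conjStarAlgAut_apply] at hspectral
  rw [mcpow, dif_pos hA.1, hdiag, ← hspectral]

theorem trace_mcpow_mul_mcpow_mul_mcpow_mul_mcpow (hA : A.PosDef) (hB : B.PosDef) {z w : ℂ}
    (hzw : z + w = 1) :
    (A.mcpow z * B.mcpow z * (B.mcpow w * A.mcpow w)).trace = (A * B).trace := by
  have hmiddle : A.mcpow z * B.mcpow z * (B.mcpow w * A.mcpow w) = A.mcpow z * (B * A.mcpow w) := by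
    rw [Matrix.mul_assoc, ← Matrix.mul_assoc (B.mcpow z), hB.1.mcpow_mul_mcpow, hzw,
      hB.mcpow_one]
  rw [hmiddle, trace_mul_comm, Matrix.mul_assoc, hA.1.mcpow_mul_mcpow, add_comm, hzw,
    hA.mcpow_one, trace_mul_comm]

end Matrix

theorem stmt1 {n : ℕ} {A B : Matrix (Fin n) (Fin n) ℂ}
    (hA : A.PosDef) (hB : B.PosDef) (y : ℝ) :
    (A.mcpow (1 / 2 + (y : ℂ) * Complex.I) * B.mcpow (1 / 2 + (y : ℂ) * Complex.I) *
      A.mcpow (1 / 2 - (y : ℂ) * Complex.I) * B.mcpow (1 / 2 - (y : ℂ) * Complex.I)).trace.re ≤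
      (A * B).trace.re := by
  set c : ℂ := 1 / 2 - (y : ℂ) * Complex.I
  set c' : ℂ := 1 / 2 + (y : ℂ) * Complex.I
  have hconj : starRingEnd ℂ c = c' := by simp [c, c', map_ofNat]
  have hsum : c' + c = 1 := by simp only [c, c']; ring
  set X := B.mcpow c * A.mcpow c
  set Y := A.mcpow c * B.mcpow c
  have hX : Xᴴ = A.mcpow c' * B.mcpow c' := by
    rw [conjTranspose_mul, hA.1.conjTranspose_mcpow, hB.1.conjTranspose_mcpow, hconj]
  have hY : Yᴴ = B.mcpow c' * A.mcpow c' := by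
    rw [conjTranspose_mul, hA.1.conjTranspose_mcpow, hB.1.conjTranspose_mcpow, hconj]
  have hXX : (Xᴴ * X).trace = (A * B).trace := by
    rw [hX, trace_mcpow_mul_mcpow_mul_mcpow_mul_mcpow hA hB hsum]
  have hYY : (Yᴴ * Y).trace = (A * B).trace := by
    rw [hY, trace_mcpow_mul_mcpow_mul_mcpow_mul_mcpow hB hA hsum, trace_mul_comm]
  have hlhs : A.mcpow c' * B.mcpow c' * A.mcpow c * B.mcpow c = Xᴴ * Y := by
    simp only [hX, Y, Matrix.mul_assoc]
  calc (A.mcpow c' * B.mcpow c' * A.mcpow c * B.mcpow c).trace.re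
      = (Xᴴ * Y).trace.re := by rw [hlhs]
    _ ≤ ((Xᴴ * X).trace.re + (Yᴴ * Y).trace.re) / 2 := re_trace_conjTranspose_mul_le X Y
    _ = (A * B).trace.re := by rw [hXX, hYY]; ring
end

section
/- For positive semidefinite n×n complex matrices A, B and any real t with 1/4 ≤ t ≤ 3/4, ‖A^t B^{1-t} + B^t A^{1-t}‖_2 ≤ ‖A + B‖_2 in the Frobenius norm. -/
open Matrix Complex
open scoped ComplexOrder

/-! Diagonalize `A = U diag(λ) U*`, `B = V diag(μ) V*` and put `w i j = |(U* V) i j|²`. By unitary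
invariance of the Frobenius norm, `‖A^s B^r‖² = ∑ λᵢ^(2s) μⱼ^(2r) wᵢⱼ` and
`‖A + B‖² = ∑ (λᵢ + μⱼ)² wᵢⱼ`. As `‖X + Y‖² ≤ 2 (‖X‖² + ‖Y‖²)` and `B^t A^(1-t) = (A^(1-t) B^t)*`,
it suffices that `2 (a^(2t) b^(2-2t) + a^(2-2t) b^(2t)) ≤ (a + b)²` for `a, b ≥ 0`. With
`p = 2t - 1/2 ∈ [0, 1]` the left side is `2 √(ab) (a^p b^(1-p) + a^(1-p) b^p)`, and weighted AM-GM
bounds the bracket by `a + b`. -/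

namespace Matrix

section Frobenius

attribute [local instance] frobeniusNormedAddCommGroup

variable {l m ι α 𝕜 : Type*} [Fintype l] [Fintype m] [Fintype ι] [RCLike 𝕜]

lemma frobenius_norm_sq_eq_sum [NormedAddCommGroup α] (M : Matrix l m α) :
    ‖M‖ ^ 2 = ∑ i, ∑ j, ‖M i j‖ ^ 2 := by
  simp_rw [frobenius_norm_def, Real.rpow_two, ← Real.sqrt_eq_rpow]
  exact Real.sq_sqrt (by positivity)

lemma frobenius_norm_sq_eq_re_trace (M : Matrix l m 𝕜) :
    ‖M‖ ^ 2 = RCLike.re (Mᴴ * M).trace := by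
  rw [frobenius_norm_sq_eq_sum, Finset.sum_comm]
  simp [trace, mul_apply, RCLike.conj_mul]

variable [DecidableEq ι]

lemma frobenius_norm_unitary_mul {U : Matrix ι ι 𝕜} (hU : U ∈ unitaryGroup ι 𝕜)
    (M : Matrix ι ι 𝕜) : ‖U * M‖ = ‖M‖ := by
  rw [← sq_eq_sq₀ (norm_nonneg _) (norm_nonneg _), frobenius_norm_sq_eq_re_trace,
    frobenius_norm_sq_eq_re_trace, conjTranspose_mul, mul_assoc, ← mul_assoc Uᴴ,
    ← star_eq_conjTranspose U, Unitary.star_mul_self_of_mem hU, one_mul]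

lemma frobenius_norm_mul_unitary (M : Matrix ι ι 𝕜) {U : Matrix ι ι 𝕜}
    (hU : U ∈ unitaryGroup ι 𝕜) : ‖M * U‖ = ‖M‖ := by
  rw [← frobenius_norm_conjTranspose, conjTranspose_mul, ← star_eq_conjTranspose U,
    frobenius_norm_unitary_mul (Unitary.star_mem hU), frobenius_norm_conjTranspose]

lemma frobenius_norm_sq_diagonal_mul_mul_diagonal (a b : ι → 𝕜) (W : Matrix ι ι 𝕜) :
    ‖diagonal a * W * diagonal b‖ ^ 2 = ∑ i, ∑ j, ‖a i * b j‖ ^ 2 * ‖W i j‖ ^ 2 := by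
  simp only [frobenius_norm_sq_eq_sum, diagonal_mul, mul_diagonal, norm_mul]
  congr! 2 with i _ j _
  ring

lemma frobenius_norm_sq_diagonal_mul_add_mul_diagonal (a b : ι → 𝕜) (W : Matrix ι ι 𝕜) :
    ‖diagonal a * W + W * diagonal b‖ ^ 2 = ∑ i, ∑ j, ‖a i + b j‖ ^ 2 * ‖W i j‖ ^ 2 := by
  simp only [frobenius_norm_sq_eq_sum, add_apply, diagonal_mul, mul_diagonal]
  congr! 2 with i _ j _
  rw [mul_comm (W i j), ← add_mul, norm_mul, mul_pow]

variable {U V : Matrix ι ι 𝕜}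

lemma frobenius_norm_sq_conj_diagonal_mul_conj_diagonal (hU : U ∈ unitaryGroup ι 𝕜)
    (hV : V ∈ unitaryGroup ι 𝕜) (a b : ι → 𝕜) :
    ‖U * diagonal a * star U * (V * diagonal b * star V)‖ ^ 2
      = ∑ i, ∑ j, ‖a i * b j‖ ^ 2 * ‖(star U * V) i j‖ ^ 2 := by
  have hconj : U * diagonal a * star U * (V * diagonal b * star V)
      = U * (diagonal a * (star U * V) * diagonal b) * star V := by
    simp only [mul_assoc]
  rw [hconj, frobenius_norm_mul_unitary _ (Unitary.star_mem hV), frobenius_norm_unitary_mul hU,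
    frobenius_norm_sq_diagonal_mul_mul_diagonal]

lemma frobenius_norm_sq_conj_diagonal_add_conj_diagonal (hU : U ∈ unitaryGroup ι 𝕜)
    (hV : V ∈ unitaryGroup ι 𝕜) (a b : ι → 𝕜) :
    ‖U * diagonal a * star U + V * diagonal b * star V‖ ^ 2
      = ∑ i, ∑ j, ‖a i + b j‖ ^ 2 * ‖(star U * V) i j‖ ^ 2 := by
  have hconj : U * diagonal a * star U + V * diagonal b * star V
      = U * (diagonal a * (star U * V) + star U * V * diagonal b) * star V := by
    rw [mul_add, add_mul]
    congr 1
    · simp only [mul_assoc, Unitary.mul_star_self_of_mem hV, mul_one]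
    · simp only [← mul_assoc, Unitary.mul_star_self_of_mem hU, one_mul]
  rw [hconj, frobenius_norm_mul_unitary _ (Unitary.star_mem hV), frobenius_norm_unitary_mul hU,
    frobenius_norm_sq_diagonal_mul_add_mul_diagonal]

lemma frob_eq_frobenius_norm {n : ℕ} (M : Matrix (Fin n) (Fin n) ℂ) : M.frob = ‖M‖ := by
  rw [frob, ← Real.sqrt_sq (norm_nonneg M), frobenius_norm_sq_eq_re_trace]
  rfl

end Frobenius

end Matrix

namespace Matrix.IsHermitian

variable {n : ℕ} {A B : Matrix (Fin n) (Fin n) ℂ}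

lemma mpow_eq (hA : A.IsHermitian) (s : ℝ) :
    A.mpow s = hA.eigenvectorUnitary *
      diagonal (fun i => ((hA.eigenvalues i ^ s : ℝ) : ℂ)) *
      star (hA.eigenvectorUnitary : Matrix (Fin n) (Fin n) ℂ) :=
  dif_pos hA

lemma eq_conj_diagonal_eigenvalues (hA : A.IsHermitian) :
    A = hA.eigenvectorUnitary * diagonal (fun i => (hA.eigenvalues i : ℂ)) *
      star (hA.eigenvectorUnitary : Matrix (Fin n) (Fin n) ℂ) :=
  hA.spectral_theorem

lemma isHermitian_mpow (hA : A.IsHermitian) (s : ℝ) : (A.mpow s).IsHermitian := by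
  rw [hA.mpow_eq, star_eq_conjTranspose]
  exact isHermitian_mul_mul_conjTranspose _
    (isHermitian_diagonal_of_self_adjoint _ (by ext i; simp [Complex.conj_ofReal]))

noncomputable def eigenvectorOverlap (hA : A.IsHermitian) (hB : B.IsHermitian) :
    Matrix (Fin n) (Fin n) ℂ :=
  star (hA.eigenvectorUnitary : Matrix (Fin n) (Fin n) ℂ) * hB.eigenvectorUnitary

section Frobenius

attribute [local instance] frobeniusNormedAddCommGroup

lemma frobenius_norm_sq_mpow_mul_mpow (hA : A.IsHermitian) (hB : B.IsHermitian) (s r : ℝ) :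
    ‖A.mpow s * B.mpow r‖ ^ 2 = ∑ i, ∑ j, (hA.eigenvalues i ^ s * hB.eigenvalues j ^ r) ^ 2 *
      ‖hA.eigenvectorOverlap hB i j‖ ^ 2 := by
  rw [hA.mpow_eq, hB.mpow_eq, frobenius_norm_sq_conj_diagonal_mul_conj_diagonal
    hA.eigenvectorUnitary.2 hB.eigenvectorUnitary.2]
  simp only [← Complex.ofReal_mul, Complex.norm_real, Real.norm_eq_abs, sq_abs]
  rfl

lemma frobenius_norm_sq_add (hA : A.IsHermitian) (hB : B.IsHermitian) :
    ‖A + B‖ ^ 2 = ∑ i, ∑ j, (hA.eigenvalues i + hB.eigenvalues j) ^ 2 *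
      ‖hA.eigenvectorOverlap hB i j‖ ^ 2 := by
  conv_lhs => rw [hA.eq_conj_diagonal_eigenvalues, hB.eq_conj_diagonal_eigenvalues]
  rw [frobenius_norm_sq_conj_diagonal_add_conj_diagonal hA.eigenvectorUnitary.2
    hB.eigenvectorUnitary.2]
  simp only [← Complex.ofReal_add, Complex.norm_real, Real.norm_eq_abs, sq_abs]
  rfl

end Frobenius

end Matrix.IsHermitian

lemma rpow_sq_eq_sqrt_mul_rpow {x s : ℝ} (hx : 0 ≤ x) (hs : 1 / 4 ≤ s) :
    (x ^ s) ^ 2 = √x * x ^ (2 * s - 1 / 2) := by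
  rw [← Real.rpow_natCast, ← Real.rpow_mul hx, Real.sqrt_eq_rpow,
    ← Real.rpow_add_of_nonneg hx (by norm_num) (by linarith)]
  congr 1
  push_cast
  ring

lemma two_mul_sq_add_sq_le_sq_add {a b t : ℝ} (ha : 0 ≤ a) (hb : 0 ≤ b) (ht1 : 1 / 4 ≤ t)
    (ht2 : t ≤ 3 / 4) :
    2 * ((a ^ t * b ^ (1 - t)) ^ 2 + (a ^ (1 - t) * b ^ t) ^ 2) ≤ (a + b) ^ 2 := by
  set p := 2 * t - 1 / 2 with hp
  have hp0 : 0 ≤ p := by linarith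
  have hp1 : 0 ≤ 1 - p := by linarith
  have hq : 2 * (1 - t) - 1 / 2 = 1 - p := by ring
  have hamgm : a ^ p * b ^ (1 - p) + a ^ (1 - p) * b ^ p ≤ a + b := by
    have h1 := Real.geom_mean_le_arith_mean2_weighted hp0 hp1 ha hb (by ring)
    have h2 := Real.geom_mean_le_arith_mean2_weighted hp1 hp0 ha hb (by ring)
    linarith
  have hsqrt : 2 * (√a * √b) ≤ a + b := by
    nlinarith [sq_nonneg (√a - √b), Real.sq_sqrt ha, Real.sq_sqrt hb]
  calc 2 * ((a ^ t * b ^ (1 - t)) ^ 2 + (a ^ (1 - t) * b ^ t) ^ 2)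
      = 2 * (√a * √b) * (a ^ p * b ^ (1 - p) + a ^ (1 - p) * b ^ p) := by
        rw [mul_pow, mul_pow, rpow_sq_eq_sqrt_mul_rpow ha ht1, rpow_sq_eq_sqrt_mul_rpow hb ht1,
          rpow_sq_eq_sqrt_mul_rpow ha (by linarith), rpow_sq_eq_sqrt_mul_rpow hb (by linarith), hq]
        ring
    _ ≤ 2 * (√a * √b) * (a + b) := by gcongr
    _ ≤ (a + b) * (a + b) := by gcongr
    _ = (a + b) ^ 2 := (sq _).symm

theorem stmt6 {n : ℕ} {A B : Matrix (Fin n) (Fin n) ℂ}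
    (hA : A.PosSemidef) (hB : B.PosSemidef) (t : ℝ) (ht1 : 1 / 4 ≤ t) (ht2 : t ≤ 3 / 4) :
    Matrix.frob (A.mpow t * B.mpow (1 - t) + B.mpow t * A.mpow (1 - t)) ≤ Matrix.frob (A + B) := by
  let _ : NormedAddCommGroup (Matrix (Fin n) (Fin n) ℂ) := frobeniusNormedAddCommGroup
  set w : Fin n → Fin n → ℝ := fun i j => ‖hA.1.eigenvectorOverlap hB.1 i j‖ ^ 2
  have hY : B.mpow t * A.mpow (1 - t) = (A.mpow (1 - t) * B.mpow t)ᴴ := by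
    rw [conjTranspose_mul, (hA.1.isHermitian_mpow _).eq, (hB.1.isHermitian_mpow _).eq]
  rw [frob_eq_frobenius_norm, frob_eq_frobenius_norm,
    ← sq_le_sq₀ (norm_nonneg _) (norm_nonneg _)]
  calc ‖A.mpow t * B.mpow (1 - t) + B.mpow t * A.mpow (1 - t)‖ ^ 2
      ≤ 2 * (‖A.mpow t * B.mpow (1 - t)‖ ^ 2 + ‖B.mpow t * A.mpow (1 - t)‖ ^ 2) :=
        (pow_le_pow_left₀ (norm_nonneg _) (norm_add_le _ _) 2).trans add_sq_le
    _ = ∑ i, ∑ j, 2 * ((hA.1.eigenvalues i ^ t * hB.1.eigenvalues j ^ (1 - t)) ^ 2 +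
          (hA.1.eigenvalues i ^ (1 - t) * hB.1.eigenvalues j ^ t) ^ 2) * w i j := by
        rw [hY, frobenius_norm_conjTranspose, hA.1.frobenius_norm_sq_mpow_mul_mpow hB.1,
          hA.1.frobenius_norm_sq_mpow_mul_mpow hB.1]
        simp only [Finset.mul_sum, ← Finset.sum_add_distrib]
        congr! 2 with i _ j _
        ring
    _ ≤ ∑ i, ∑ j, (hA.1.eigenvalues i + hB.1.eigenvalues j) ^ 2 * w i j := by
        gcongr with i _ j _
        exact two_mul_sq_add_sq_le_sq_add (hA.eigenvalues_nonneg i) (hB.eigenvalues_nonneg j)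
          ht1 ht2
    _ = ‖A + B‖ ^ 2 := (hA.1.frobenius_norm_sq_add hB.1).symm
end

section
/- Let A, B be positive semidefinite n×n complex matrices. If Re Tr(A^{1/2} B^{1/2} A^{1/2} B^{1/2}) = Tr(AB), then A and B commute. -/
open Matrix Complex
open scoped ComplexOrder

/-!
With `S = A^{1/2}` and `T = B^{1/2}` Hermitian, the squared Hilbert–Schmidt norm of the commutator
is `tr((ST - TS)(ST - TS)ᴴ) = 2 tr(S²T²) - 2 tr(STST) = 2 (tr(AB) - tr(STST))`. The hypothesis makes
its real part vanish, and it is a nonnegative real number, so `ST = TS`; then `A = S²` and `B = T²`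
commute as well.
-/

namespace Matrix

lemma IsHermitian.mpow_eq_cfc {n : ℕ} {A : Matrix (Fin n) (Fin n) ℂ} (hA : A.IsHermitian) (t : ℝ) :
    A.mpow t = cfc (fun x : ℝ => x ^ t) A := by
  rw [hA.cfc_eq, IsHermitian.cfc, mpow, dif_pos hA]
  rfl

open scoped MatrixOrder in
lemma PosSemidef.mpow_half_eq_sqrt {n : ℕ} {A : Matrix (Fin n) (Fin n) ℂ} (hA : A.PosSemidef) :
    A.mpow (1 / 2) = CFC.sqrt A := by
  rw [hA.isHermitian.mpow_eq_cfc, CFC.sqrt_eq_real_sqrt A hA.nonneg, cfcₙ_eq_cfc]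
  exact cfc_congr fun x _ => (Real.sqrt_eq_rpow x).symm

variable {m R : Type*} [Fintype m] [CommRing R] [StarRing R]

lemma trace_commutator_mul_conjTranspose {S T : Matrix m m R} (hS : S.IsHermitian)
    (hT : T.IsHermitian) :
    ((S * T - T * S) * (S * T - T * S)ᴴ).trace =
      2 * ((S * S * (T * T)).trace - (S * T * S * T).trace) := by
  have hC : (S * T - T * S)ᴴ = T * S - S * T := by
    rw [conjTranspose_sub, conjTranspose_mul, conjTranspose_mul, hS.eq, hT.eq]
  have h₁ : (S * T * (T * S)).trace = (S * S * (T * T)).trace := by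
    rw [← Matrix.mul_assoc, trace_mul_comm]; simp only [Matrix.mul_assoc]
  have h₂ : (T * S * (S * T)).trace = (S * S * (T * T)).trace := by
    rw [trace_mul_comm, h₁]
  have h₃ : (T * S * (T * S)).trace = (S * T * S * T).trace := by
    rw [← Matrix.mul_assoc, trace_mul_comm]; simp only [Matrix.mul_assoc]
  rw [hC, sub_mul, mul_sub, mul_sub, trace_sub, trace_sub, trace_sub, h₁, h₂, h₃,
    ← Matrix.mul_assoc (S * T)]
  ring

lemma IsHermitian.commute_of_re_trace_eq {𝕜 : Type*} [RCLike 𝕜] {S T : Matrix m m 𝕜}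
    (hS : S.IsHermitian) (hT : T.IsHermitian)
    (h : RCLike.re (S * T * S * T).trace = RCLike.re (S * S * (T * T)).trace) :
    Commute S T := by
  have hC : ((S * T - T * S) * (S * T - T * S)ᴴ).trace = 0 := by
    obtain ⟨-, him⟩ := RCLike.nonneg_iff.mp
      (posSemidef_self_mul_conjTranspose (S * T - T * S)).trace_nonneg
    refine RCLike.ext ?_ (by simpa using him)
    rw [trace_commutator_mul_conjTranspose hS hT]
    simp [h]
  exact sub_eq_zero.mp (trace_mul_conjTranspose_self_eq_zero_iff.mp hC)

end Matrix

theorem stmt8 {n : ℕ} {A B : Matrix (Fin n) (Fin n) ℂ}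
    (hA : A.PosSemidef) (hB : B.PosSemidef)
    (h : (A.mpow (1 / 2) * B.mpow (1 / 2) * A.mpow (1 / 2) * B.mpow (1 / 2)).trace.re =
      (A * B).trace.re) :
    A * B = B * A := by
  open scoped MatrixOrder in
  obtain ⟨hSS, hTT⟩ : CFC.sqrt A * CFC.sqrt A = A ∧ CFC.sqrt B * CFC.sqrt B = B :=
    ⟨CFC.sqrt_mul_sqrt_self A hA.nonneg, CFC.sqrt_mul_sqrt_self B hB.nonneg⟩
  rw [hA.mpow_half_eq_sqrt, hB.mpow_half_eq_sqrt] at h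
  have hST : Commute (CFC.sqrt A) (CFC.sqrt B) :=
    IsHermitian.commute_of_re_trace_eq (CFC.sqrt_nonneg A).isSelfAdjoint
      (CFC.sqrt_nonneg B).isSelfAdjoint (by rw [hSS, hTT]; exact h)
  rw [← hSS, ← hTT]
  exact ((hST.mul_left hST).mul_right (hST.mul_left hST)).eq
end

section
/- Let A, B be positive semidefinite n×n complex matrices. If ‖A^{1/4} B^{1/4}‖_4 = (Tr(AB))^{1/4} (Schatten 4-norm), then A and B commute. -/
open Matrix Complex
open scoped ComplexOrder

/-!
Write `M = A^{1/2}`, `N = B^{1/2}` and `Y = M N`. Cycling the trace gives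
`‖A^{1/4} B^{1/4}‖₄⁴ = Tr (M N M N) = Re Tr (Y²)` and `Tr (A B) = Tr (Yᴴ Y)`. Since
`‖Yᴴ - Y‖₂² = 2 Tr (Yᴴ Y) - 2 Re Tr (Y²)`, equality forces `Y` to be Hermitian, i.e. `M` and `N`
commute, and then so do their squares `A` and `B`.
-/

namespace Matrix

section Trace

variable {n R : Type*} [Fintype n] [CommRing R] [StarRing R]

lemma IsHermitian.trace_conjTranspose_mul_mul_self_sq {P Q : Matrix n n R}
    (hP : P.IsHermitian) (hQ : Q.IsHermitian) :
    ((P * Q)ᴴ * (P * Q) * ((P * Q)ᴴ * (P * Q))).trace =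
      (P * P * (Q * Q) * (P * P * (Q * Q))).trace := by
  rw [conjTranspose_mul, hP.eq, hQ.eq]
  simp only [Matrix.mul_assoc]
  rw [trace_mul_comm]
  simp only [Matrix.mul_assoc]

lemma IsHermitian.trace_mul_self_mul_mul_self {M N : Matrix n n R}
    (hM : M.IsHermitian) (hN : N.IsHermitian) :
    (M * M * (N * N)).trace = ((M * N)ᴴ * (M * N)).trace := by
  rw [conjTranspose_mul, hM.eq, hN.eq, Matrix.mul_assoc N, trace_mul_comm N]
  simp only [Matrix.mul_assoc]

end Trace

section Complex

variable {n : Type*} [Fintype n] [DecidableEq n]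

lemma trace_conjStarAlgAut (U : unitary (Matrix n n ℂ)) (X : Matrix n n ℂ) :
    (Unitary.conjStarAlgAut ℂ _ U X).trace = X.trace := by
  rw [Unitary.conjStarAlgAut_apply, trace_mul_cycle, Unitary.coe_star_mul_self, Matrix.one_mul]

lemma IsHermitian.trace_mul_self {A : Matrix n n ℂ} (hA : A.IsHermitian) :
    (A * A).trace = ((∑ i, hA.eigenvalues i ^ 2 : ℝ) : ℂ) := by
  conv_lhs => rw [hA.spectral_theorem, ← map_mul, trace_conjStarAlgAut, diagonal_mul_diagonal]
  simp [trace_diagonal, sq]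

lemma isHermitian_of_re_trace_mul_self_eq {Y : Matrix n n ℂ}
    (h : (Y * Y).trace.re = (Yᴴ * Y).trace.re) : Y.IsHermitian := by
  obtain ⟨-, him⟩ := Complex.nonneg_iff.mp (posSemidef_conjTranspose_mul_self Y).trace_nonneg
  have hreal : ((Yᴴ * Y).trace.re : ℂ) = (Yᴴ * Y).trace := Complex.ext rfl (by simp [him])
  have hsq : (Yᴴ * Yᴴ).trace = star (Y * Y).trace := by
    rw [← conjTranspose_mul, trace_conjTranspose]
  set K := Yᴴ - Y
  have hK : (Kᴴ * K).trace = 0 := by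
    have expand : Kᴴ * K = Y * Yᴴ + Yᴴ * Y - Y * Y - Yᴴ * Yᴴ := by
      simp only [K, conjTranspose_sub, conjTranspose_conjTranspose]
      noncomm_ring
    rw [expand, trace_sub, trace_sub, trace_add, trace_mul_comm Y Yᴴ, hsq, ← hreal,
      ← Complex.re_add_im (Y * Y).trace]
    simp only [h, Complex.star_def, map_add, map_mul, Complex.conj_ofReal, Complex.conj_I]
    ring
  exact sub_eq_zero.mp (trace_conjTranspose_mul_self_eq_zero_iff.mp hK)

end Complex

section Power

variable {n : ℕ} {A : Matrix (Fin n) (Fin n) ℂ}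

lemma IsHermitian.mpow_eq_s9 (hA : A.IsHermitian) (t : ℝ) :
    A.mpow t = Unitary.conjStarAlgAut ℂ _ hA.eigenvectorUnitary
      (diagonal fun i => ((hA.eigenvalues i ^ t : ℝ) : ℂ)) := by
  rw [mpow, dif_pos hA, Unitary.conjStarAlgAut_apply]

lemma IsHermitian.isHermitian_mpow_s9 (hA : A.IsHermitian) (t : ℝ) : (A.mpow t).IsHermitian := by
  rw [hA.mpow_eq_s9, IsHermitian, ← star_eq_conjTranspose, ← map_star, star_eq_conjTranspose,
    diagonal_conjTranspose]
  congr! with i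
  simp

lemma IsHermitian.mpow_one (hA : A.IsHermitian) : A.mpow 1 = A := by
  conv_rhs => rw [hA.spectral_theorem]
  rw [hA.mpow_eq_s9]
  congr! with i
  simp

lemma PosSemidef.mpow_mul_mpow (hA : A.PosSemidef) {s t : ℝ} (hst : s + t ≠ 0) :
    A.mpow s * A.mpow t = A.mpow (s + t) := by
  rw [hA.1.mpow_eq_s9, hA.1.mpow_eq_s9, hA.1.mpow_eq_s9, ← map_mul, diagonal_mul_diagonal]
  congr! with i
  rw [← Complex.ofReal_mul, ← Real.rpow_add' (hA.eigenvalues_nonneg i) hst]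

lemma PosSemidef.mpow_half_mul_self (hA : A.PosSemidef) : A.mpow (1 / 2) * A.mpow (1 / 2) = A := by
  rw [hA.mpow_mul_mpow (by norm_num)]
  norm_num [hA.1.mpow_one]

lemma PosSemidef.mpow_quarter_mul_self (hA : A.PosSemidef) :
    A.mpow (1 / 4) * A.mpow (1 / 4) = A.mpow (1 / 2) := by
  rw [hA.mpow_mul_mpow (by norm_num)]
  norm_num

end Power

lemma schatten_four_rpow_four {n : ℕ} (X : Matrix (Fin n) (Fin n) ℂ) :
    schatten 4 X ^ (4 : ℝ) = ((Xᴴ * X) * (Xᴴ * X)).trace.re := by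
  rw [schatten, (posSemidef_conjTranspose_mul_self X).1.trace_mul_self, Complex.ofReal_re,
    show (4 : ℝ) / 2 = (2 : ℕ) by norm_num]
  simp only [Real.rpow_natCast]
  rw [one_div, Real.rpow_inv_rpow (by positivity) four_ne_zero]

end Matrix

theorem stmt9 {n : ℕ} {A B : Matrix (Fin n) (Fin n) ℂ}
    (hA : A.PosSemidef) (hB : B.PosSemidef)
    (h : Matrix.schatten 4 (A.mpow (1 / 4) * B.mpow (1 / 4)) =
      ((A * B).trace.re) ^ (1 / (4 : ℝ))) :
    A * B = B * A := by
  have hM : (A.mpow (1 / 2)).IsHermitian := hA.1.isHermitian_mpow_s9 _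
  have hN : (B.mpow (1 / 2)).IsHermitian := hB.1.isHermitian_mpow_s9 _
  have hAB : (A * B).trace = ((A.mpow (1 / 2) * B.mpow (1 / 2))ᴴ *
      (A.mpow (1 / 2) * B.mpow (1 / 2))).trace := by
    rw [← hM.trace_mul_self_mul_mul_self hN, hA.mpow_half_mul_self, hB.mpow_half_mul_self]
  have hAB_nonneg : 0 ≤ (A * B).trace.re := by
    rw [hAB]
    exact (Complex.nonneg_iff.mp (posSemidef_conjTranspose_mul_self _).trace_nonneg).1
  have h4 := congrArg (· ^ (4 : ℝ)) h
  rw [schatten_four_rpow_four,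
    (hA.1.isHermitian_mpow_s9 _).trace_conjTranspose_mul_mul_self_sq (hB.1.isHermitian_mpow_s9 _),
    hA.mpow_quarter_mul_self, hB.mpow_quarter_mul_self, one_div (4 : ℝ),
    Real.rpow_inv_rpow hAB_nonneg four_ne_zero, hAB] at h4
  have hcomm : Commute (A.mpow (1 / 2)) (B.mpow (1 / 2)) :=
    (hM.commute_iff hN).mpr (isHermitian_of_re_trace_mul_self_eq h4)
  rw [← hA.mpow_half_mul_self, ← hB.mpow_half_mul_self]
  exact (hcomm.mul_left hcomm).mul_right (hcomm.mul_left hcomm)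
end

section
/- Let A, B be positive semidefinite n×n complex matrices. If X = A^{1/2}B^{1/2} satisfies Tr(X^2) = Tr(X*X) (with real values), then X is Hermitian, i.e. A^{1/2}B^{1/2} = B^{1/2}A^{1/2}. -/
open Matrix Complex
open scoped ComplexOrder

/-! With `X = A^{1/2} B^{1/2}`, the hypothesis makes the Frobenius norm of the skew part vanish:
`Tr((X - Xᴴ)ᴴ (X - Xᴴ)) = 2 Tr(XᴴX) - Tr(X²) - conj Tr(X²) = 0`. Hence `X` is Hermitian, and a product
of two Hermitian matrices is Hermitian exactly when they commute. -/

lemma Matrix.isHermitian_mpow {n : ℕ} {A : Matrix (Fin n) (Fin n) ℂ} (hA : A.IsHermitian) (t : ℝ) :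
    (A.mpow t).IsHermitian := by
  have hD : (diagonal fun i => ((hA.eigenvalues i ^ t : ℝ) : ℂ)).IsHermitian := by
    simp [IsHermitian, diagonal_conjTranspose]
  rw [Matrix.mpow, dif_pos hA]
  exact isHermitian_mul_mul_conjTranspose _ hD

lemma Matrix.trace_conjTranspose_mul_self_sub_conjTranspose {m R : Type*} [Fintype m] [CommRing R]
    [StarRing R] (X : Matrix m m R) :
    ((X - Xᴴ)ᴴ * (X - Xᴴ)).trace =
      2 * (Xᴴ * X).trace - (X * X).trace - star (X * X).trace := by
  have hXX : (Xᴴ * Xᴴ).trace = star (X * X).trace := by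
    rw [← conjTranspose_mul, trace_conjTranspose]
  simp only [conjTranspose_sub, conjTranspose_conjTranspose, sub_mul, mul_sub, trace_sub, hXX,
    trace_mul_comm X Xᴴ]
  ring

lemma Matrix.isHermitian_of_trace_mul_self_eq {m R : Type*} [Fintype m] [CommRing R]
    [PartialOrder R] [StarRing R] [StarOrderedRing R] [NoZeroDivisors R] {X : Matrix m m R}
    (h : (X * X).trace = (Xᴴ * X).trace) : X.IsHermitian := by
  have hstar : star (Xᴴ * X).trace = (Xᴴ * X).trace := by
    rw [← trace_conjTranspose, conjTranspose_mul, conjTranspose_conjTranspose]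
  have hskew : ((X - Xᴴ)ᴴ * (X - Xᴴ)).trace = 0 := by
    rw [trace_conjTranspose_mul_self_sub_conjTranspose, h, hstar]
    ring
  exact (sub_eq_zero.mp (trace_conjTranspose_mul_self_eq_zero_iff.mp hskew)).symm

theorem stmt10 {n : ℕ} {A B : Matrix (Fin n) (Fin n) ℂ}
    (hA : A.PosSemidef) (hB : B.PosSemidef)
    (h : ((A.mpow (1 / 2) * B.mpow (1 / 2)) * (A.mpow (1 / 2) * B.mpow (1 / 2))).trace =
      ((A.mpow (1 / 2) * B.mpow (1 / 2))ᴴ * (A.mpow (1 / 2) * B.mpow (1 / 2))).trace) :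
    (A.mpow (1 / 2) * B.mpow (1 / 2))ᴴ = A.mpow (1 / 2) * B.mpow (1 / 2) ∧
      A.mpow (1 / 2) * B.mpow (1 / 2) = B.mpow (1 / 2) * A.mpow (1 / 2) := by
  have hA' := Matrix.isHermitian_mpow hA.1 (1 / 2)
  have hB' := Matrix.isHermitian_mpow hB.1 (1 / 2)
  have hX := Matrix.isHermitian_of_trace_mul_self_eq h
  exact ⟨hX.eq, ((hA'.commute_iff hB').mpr hX).eq⟩
end

section
/- Let A, B be positive definite n×n complex matrices and y ∈ ℝ. If A^{1/4+iy} B^{1/4+iy} = B^{1/4+iy} A^{1/4+iy}, then A and B commute. -/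
open Matrix Complex
open scoped ComplexOrder

theorem Complex.exp_mul_ofReal_injective {z : ℂ} (hz : z.re ≠ 0) :
    Function.Injective fun x : ℝ => exp (z * x) := by
  intro x w h
  obtain ⟨k, hk⟩ := exp_eq_exp_iff_exists_int.mp h
  simpa [hz] using congrArg re hk

namespace Matrix

section Diagonal

variable {ι R : Type*} [Fintype ι] [DecidableEq ι] [CommRing R] [NoZeroDivisors R]

theorem commute_diagonal_of_commute_diagonal {M : Matrix ι ι R} {d e : ι → R}
    (hde : ∀ i j, d i = d j → e i = e j) (h : Commute M (diagonal d)) :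
    Commute M (diagonal e) := by
  ext i j
  have hij : M i j * d j = d i * M i j := by simpa using congr_fun₂ h i j
  rcases eq_or_ne (M i j) 0 with hM | hM
  · simp [hM]
  · have hd : d j = d i := mul_left_cancel₀ hM (by rw [hij, mul_comm])
    simp [hde j i hd, mul_comm]

theorem commute_conj_diagonal_of_commute_conj_diagonal [StarRing R]
    (u : unitary (Matrix ι ι R)) {X : Matrix ι ι R} {d e : ι → R}
    (hde : ∀ i j, d i = d j → e i = e j)
    (h : Commute X (Unitary.conjStarAlgAut R _ u (diagonal d))) :
    Commute X (Unitary.conjStarAlgAut R _ u (diagonal e)) := by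
  set φ := Unitary.conjStarAlgAut R _ u
  have h' : Commute (φ.symm X) (diagonal d) := by simpa using h.map φ.symm
  simpa using (commute_diagonal_of_commute_diagonal hde h').map φ

end Diagonal

theorem mcpow_of_isHermitian {n : ℕ} {A : Matrix (Fin n) (Fin n) ℂ} (hA : A.IsHermitian) (z : ℂ) :
    A.mcpow z = Unitary.conjStarAlgAut ℂ _ hA.eigenvectorUnitary
      (diagonal fun i => exp (z * Real.log (hA.eigenvalues i))) :=
  dif_pos hA

theorem PosDef.commute_of_commute_mcpow {n : ℕ} {A X : Matrix (Fin n) (Fin n) ℂ}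
    (hA : A.PosDef) {z : ℂ} (hz : z.re ≠ 0) (h : Commute X (A.mcpow z)) : Commute X A := by
  rw [mcpow_of_isHermitian hA.isHermitian] at h
  rw [hA.isHermitian.spectral_theorem]
  refine commute_conj_diagonal_of_commute_conj_diagonal _ (fun i j hij => ?_) h
  have := Real.log_injOn_pos (hA.eigenvalues_pos i) (hA.eigenvalues_pos j)
    (exp_mul_ofReal_injective hz hij)
  simp [this]

end Matrix

theorem stmt12 {n : ℕ} {A B : Matrix (Fin n) (Fin n) ℂ}
    (hA : A.PosDef) (hB : B.PosDef) (y : ℝ)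
    (h : A.mcpow (1 / 4 + (y : ℂ) * Complex.I) * B.mcpow (1 / 4 + (y : ℂ) * Complex.I) =
      B.mcpow (1 / 4 + (y : ℂ) * Complex.I) * A.mcpow (1 / 4 + (y : ℂ) * Complex.I)) :
    A * B = B * A := by
  have hz : (1 / 4 + (y : ℂ) * Complex.I).re ≠ 0 := by norm_num
  have hAzB : Commute (A.mcpow _) B := hB.commute_of_commute_mcpow hz h
  exact (hA.commute_of_commute_mcpow hz hAzB.symm).symm.eq
end

section
/- Let A, B be positive semidefinite n×n complex matrices that do not commute. Then for every t ∈ [1/4, 3/4], the strict inequality Re Tr(A^t B^t A^{1-t} B^{1-t}) < Tr(AB) holds, and there exists δ > 0 such that the non-strict inequality Re Tr(A^t B^t A^{1-t} B^{1-t}) ≤ Tr(AB) holds for all t ∈ [1/4 − δ, 3/4 + δ]. -/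
/-!
Write `Φ(z) = Tr(A^z B^z A^{1-z} B^{1-z})`, with `0^z := 0` on the kernels, so that `Φ` is entire;
it is bounded on the strip `0 ≤ Re z ≤ 1` and `Φ(1 - z) = Φ(z)`. On the line `Re z = 1/4` one has
`z̄ = 1/2 - z`, so `Φ(z) = Tr(XY)` with `X = B^{z̄} A^z B^z A^{1/4}`, `Y = A^{3/4-z} B^{1/2}`, where
`Tr(Y*Y) = Tr(AB)` and `Tr(XX*) = Tr(ST)` for the Hermitian matrices `S = B^z A^{1/2} B^{z̄}`,
`T = A^{z̄} B^{1/2} A^z`, whose squares both have trace `Tr(A^{1/2}B^{1/2}A^{1/2}B^{1/2})`.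
Two applications of `2 Re Tr(XY) ≤ Tr(XX*) + Tr(Y*Y)` give
`Re Φ(z) ≤ Tr(AB) - ‖[A^{1/2}, B^{1/2}]‖₂² / 4`, and the commutator is nonzero since `AB ≠ BA`.
By symmetry the bound also holds on `Re z = 3/4`, and Phragmén–Lindelöf applied to `exp Φ` extends
it to the strip `1/4 ≤ Re z ≤ 3/4`. A strict inequality on the compact interval `[1/4, 3/4]`
persists on a neighbourhood of it by continuity.
-/

open Matrix Complex
open scoped ComplexOrder

/-- Unlike `(0 : ℂ) ^ z`, which is `1` at `z = 0`, this is entire in `z` also for `a = 0`. -/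
noncomputable def Real.cpowPos (a : ℝ) (z : ℂ) : ℂ :=
  if 0 < a then (a : ℂ) ^ z else 0

namespace Real

lemma cpowPos_add (a : ℝ) (z w : ℂ) : cpowPos a (z + w) = cpowPos a z * cpowPos a w := by
  unfold cpowPos
  split_ifs with ha
  · exact Complex.cpow_add _ _ (by exact_mod_cast ha.ne')
  · simp

lemma star_cpowPos (a : ℝ) (z : ℂ) : star (cpowPos a z) = cpowPos a (starRingEnd ℂ z) := by
  unfold cpowPos
  split_ifs with ha
  · rw [Complex.cpow_conj _ _ (by simp [Complex.arg_ofReal_of_nonneg ha.le, Real.pi_ne_zero.symm]),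
      Complex.conj_ofReal, Complex.star_def]
  · simp

lemma cpowPos_one {a : ℝ} (ha : 0 ≤ a) : cpowPos a 1 = a := by
  unfold cpowPos
  split_ifs with ha'
  · exact Complex.cpow_one _
  · simp [le_antisymm (not_lt.1 ha') ha]

lemma cpowPos_ofReal {a : ℝ} (ha : 0 ≤ a) {t : ℝ} (ht : 0 < t) :
    cpowPos a t = ((a ^ t : ℝ) : ℂ) := by
  unfold cpowPos
  split_ifs with ha'
  · exact (Complex.ofReal_cpow ha t).symm
  · simp [le_antisymm (not_lt.1 ha') ha, Real.zero_rpow ht.ne']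

lemma differentiable_cpowPos (a : ℝ) : Differentiable ℂ (cpowPos a) := by
  unfold cpowPos
  split_ifs with ha
  · exact differentiable_id.const_cpow (.inl (by exact_mod_cast ha.ne'))
  · exact differentiable_const 0

lemma norm_cpowPos_le (a : ℝ) {z : ℂ} (h0 : 0 ≤ z.re) (h1 : z.re ≤ 1) :
    ‖cpowPos a z‖ ≤ max 1 a := by
  unfold cpowPos
  split_ifs with ha
  · rw [Complex.norm_cpow_eq_rpow_re_of_pos ha]
    rcases le_total a 1 with ha1 | ha1
    · exact (Real.rpow_le_one ha.le ha1 h0).trans (le_max_left _ _)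
    · calc a ^ z.re ≤ a ^ (1 : ℝ) := Real.rpow_le_rpow_of_exponent_le ha1 h1
        _ ≤ max 1 a := by rw [Real.rpow_one]; exact le_max_right _ _
  · simp

end Real

open Filter in
lemma Complex.re_le_of_diffContOnCl_verticalStrip {f : ℂ → ℂ} {a b M : ℝ}
    (hfd : DiffContOnCl ℂ f (re ⁻¹' Set.Ioo a b))
    (hbdd : BddAbove ((fun z ↦ (f z).re) '' (re ⁻¹' Set.Ioo a b)))
    (ha : ∀ z : ℂ, z.re = a → (f z).re ≤ M) (hb : ∀ z : ℂ, z.re = b → (f z).re ≤ M)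
    {z : ℂ} (hza : a ≤ z.re) (hzb : z.re ≤ b) : (f z).re ≤ M := by
  obtain ⟨C, hC⟩ := hbdd
  have hexp : ‖exp (f z)‖ ≤ Real.exp M := by
    refine PhragmenLindelof.vertical_strip (f := fun w ↦ exp (f w))
      (Complex.differentiable_exp.comp_diffContOnCl hfd) ⟨Real.pi / (b - a) - 1, by linarith, 0, ?_⟩
      (fun w hw ↦ ?_) (fun w hw ↦ ?_) hza hzb
    · simp only [zero_mul, Real.exp_zero]
      refine .of_bound (Real.exp C) (eventually_inf_principal.2 (.of_forall fun w hw ↦ ?_))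
      simpa [norm_exp] using hC ⟨w, hw, rfl⟩
    · simpa [norm_exp] using ha w hw
    · simpa [norm_exp] using hb w hw
  rwa [norm_exp, Real.exp_le_exp] at hexp

lemma Real.exists_Icc_sub_add_subset_of_isOpen {a b : ℝ} (hab : a ≤ b) {U : Set ℝ} (hU : IsOpen U)
    (hsub : Set.Icc a b ⊆ U) : ∃ δ > 0, Set.Icc (a - δ) (b + δ) ⊆ U := by
  obtain ⟨δ, hδ, hδU⟩ := isCompact_Icc.exists_cthickening_subset_open hU hsub
  refine ⟨δ, hδ, fun t ht ↦ hδU ?_⟩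
  have hproj : max a (min b t) ∈ Set.Icc a b := ⟨le_max_left _ _, max_le hab (min_le_left _ _)⟩
  refine Metric.closedBall_subset_cthickening hproj δ ?_
  rw [Metric.mem_closedBall, Real.dist_eq, abs_le]
  constructor <;> cases ht <;> grind

namespace Matrix

variable {m : Type*} [Fintype m]

lemma trace_commutator_conjTranspose_mul_self {R : Type*} [CommRing R] [StarRing R]
    {a b : Matrix m m R} (ha : a.IsHermitian) (hb : b.IsHermitian) :
    ((a * b - b * a)ᴴ * (a * b - b * a)).trace =
      2 * (a * a * (b * b)).trace - 2 * (a * b * a * b).trace := by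
  rw [conjTranspose_sub, conjTranspose_mul, conjTranspose_mul, ha.eq, hb.eq]
  have h1 : (b * a * (a * b)).trace = (a * a * (b * b)).trace := by
    simp only [Matrix.mul_assoc]; rw [trace_mul_comm]; simp only [Matrix.mul_assoc]
  have h2 : (b * a * (b * a)).trace = (a * b * a * b).trace := by
    simp only [Matrix.mul_assoc]; rw [trace_mul_comm]; simp only [Matrix.mul_assoc]
  have h3 : (a * b * (b * a)).trace = (a * a * (b * b)).trace := by
    rw [trace_mul_comm, h1]
  have h4 : (a * b * (a * b)).trace = (a * b * a * b).trace := by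
    simp only [Matrix.mul_assoc]
  rw [sub_mul, mul_sub, mul_sub, trace_sub, trace_sub, trace_sub, h1, h2, h3, h4]
  ring

lemma mul_mul_eq_mul_of_mul_eq {a : ℂ → Matrix m m ℂ} (ha : ∀ s t, a s * a t = a (s + t))
    (s t : ℂ) (M : Matrix m m ℂ) : a s * (a t * M) = a (s + t) * M := by
  rw [← Matrix.mul_assoc, ha]

variable [DecidableEq m]

lemma two_mul_re_trace_mul_le (X Y : Matrix m m ℂ) :
    2 * (X * Y).trace.re ≤ (X * Xᴴ).trace.re + (Yᴴ * Y).trace.re := by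
  have h0 := Complex.nonneg_iff.1 (posSemidef_conjTranspose_mul_self (Xᴴ - Y)).trace_nonneg
  have hexp : (Xᴴ - Y)ᴴ * (Xᴴ - Y) = X * Xᴴ - X * Y - (X * Y)ᴴ + Yᴴ * Y := by
    rw [conjTranspose_sub, conjTranspose_conjTranspose, conjTranspose_mul]
    noncomm_ring
  rw [hexp, trace_add, trace_sub, trace_sub, trace_conjTranspose] at h0
  simp only [Complex.add_re, Complex.sub_re, Complex.star_def, Complex.conj_re] at h0
  linarith [h0.1]

section QuarterLine

variable {a b : ℂ → Matrix m m ℂ}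
  (ha : ∀ s t, a s * a t = a (s + t)) (hb : ∀ s t, b s * b t = b (s + t))
  (ha' : ∀ s, (a s)ᴴ = a (starRingEnd ℂ s)) (hb' : ∀ s, (b s)ᴴ = b (starRingEnd ℂ s))
  {z : ℂ} (hz : z.re = 1 / 4)
include ha hb ha' hb' hz

lemma two_mul_re_trace_le_of_re_eq_quarter :
    2 * (a z * b z * a (1 - z) * b (1 - z)).trace.re ≤
      (b z * a (1 / 2) * b (1 / 2 - z) * (a (1 / 2 - z) * b (1 / 2) * a z)).trace.re +
        (a 1 * b 1).trace.re := by
  have ha₂ := mul_mul_eq_mul_of_mul_eq ha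
  have hconj : starRingEnd ℂ z = 1 / 2 - z := Complex.ext (by simp; linarith) (by simp)
  set X := b (1 / 2 - z) * a z * b z * a (1 / 4)
  set Y := a (3 / 4 - z) * b (1 / 2)
  have hXY : (a z * b z * a (1 - z) * b (1 - z)).trace = (X * Y).trace := by
    simp only [X, Y, Matrix.mul_assoc, ha₂]
    rw [trace_mul_comm (b (1 / 2 - z))]
    simp only [Matrix.mul_assoc, hb]
    ring_nf
  have hY : (Yᴴ * Y).trace = (a 1 * b 1).trace := by
    simp only [Y, conjTranspose_mul, ha', hb', map_sub, map_div₀, map_one, map_ofNat, hconj,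
      Matrix.mul_assoc, ha₂]
    rw [trace_mul_comm (b _)]
    simp only [Matrix.mul_assoc, hb]
    ring_nf
  have hX : (X * Xᴴ).trace =
      (b z * a (1 / 2) * b (1 / 2 - z) * (a (1 / 2 - z) * b (1 / 2) * a z)).trace := by
    simp only [X, conjTranspose_mul, ha', hb', map_sub, map_div₀, map_one, map_ofNat, hconj,
      Matrix.mul_assoc, ha₂]
    rw [trace_mul_comm (b (1 / 2 - z))]
    simp only [Matrix.mul_assoc, hb]
    rw [trace_mul_comm (a z)]
    simp only [Matrix.mul_assoc]
    ring_nf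
  rw [hXY, ← hX, ← hY]
  exact two_mul_re_trace_mul_le X Y

lemma re_trace_le_of_re_eq_quarter :
    (b z * a (1 / 2) * b (1 / 2 - z) * (a (1 / 2 - z) * b (1 / 2) * a z)).trace.re ≤
      (a (1 / 2) * b (1 / 2) * a (1 / 2) * b (1 / 2)).trace.re := by
  have ha₂ := mul_mul_eq_mul_of_mul_eq ha
  have hb₂ := mul_mul_eq_mul_of_mul_eq hb
  have hconj : starRingEnd ℂ z = 1 / 2 - z := Complex.ext (by simp; linarith) (by simp)
  set S := b z * a (1 / 2) * b (1 / 2 - z)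
  set T := a (1 / 2 - z) * b (1 / 2) * a z
  have hS : Sᴴ = S := by
    simp only [S, conjTranspose_mul, ha', hb', map_sub, map_div₀, map_one, map_ofNat, hconj,
      Matrix.mul_assoc]
    ring_nf
  have hT : Tᴴ = T := by
    simp only [T, conjTranspose_mul, ha', hb', map_sub, map_div₀, map_one, map_ofNat, hconj,
      Matrix.mul_assoc]
    ring_nf
  have hSS : (S * S).trace = (a (1 / 2) * b (1 / 2) * a (1 / 2) * b (1 / 2)).trace := by
    simp only [S, Matrix.mul_assoc, hb₂]
    rw [trace_mul_comm (b z)]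
    simp only [Matrix.mul_assoc, hb]
    ring_nf
  have hTT : (T * T).trace = (a (1 / 2) * b (1 / 2) * a (1 / 2) * b (1 / 2)).trace := by
    simp only [T, Matrix.mul_assoc, ha₂]
    rw [trace_mul_comm (a (1 / 2 - z))]
    simp only [Matrix.mul_assoc, ha]
    rw [trace_mul_comm (b (1 / 2))]
    simp only [Matrix.mul_assoc]
    ring_nf
  have hST := two_mul_re_trace_mul_le S T
  rw [hS, hT, hSS, hTT] at hST
  linarith

end QuarterLine

end Matrix

namespace Matrix.IsHermitian

variable {m : Type*} [Fintype m] [DecidableEq m] {A : Matrix m m ℂ} (hA : A.IsHermitian)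

noncomputable def funCalc (f : ℝ → ℂ) : Matrix m m ℂ :=
  (hA.eigenvectorUnitary : Matrix m m ℂ) * diagonal (f ∘ hA.eigenvalues) *
    star (hA.eigenvectorUnitary : Matrix m m ℂ)

lemma funCalc_mul_funCalc (f g : ℝ → ℂ) : hA.funCalc f * hA.funCalc g = hA.funCalc (f * g) := by
  simp only [funCalc, Matrix.mul_assoc]
  rw [← Matrix.mul_assoc (star _) _ _, Unitary.coe_star_mul_self, Matrix.one_mul,
    ← Matrix.mul_assoc (diagonal _), diagonal_mul_diagonal]
  rfl

lemma conjTranspose_funCalc (f : ℝ → ℂ) : (hA.funCalc f)ᴴ = hA.funCalc (star f) := by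
  rw [funCalc, funCalc, conjTranspose_mul, conjTranspose_mul, diagonal_conjTranspose,
    ← star_eq_conjTranspose, star_star, Matrix.mul_assoc]
  rfl

lemma funCalc_ofReal : hA.funCalc (fun x ↦ (x : ℂ)) = A :=
  hA.spectral_theorem.symm

noncomputable def cpow (z : ℂ) : Matrix m m ℂ :=
  hA.funCalc (Real.cpowPos · z)

lemma cpow_mul_cpow (z w : ℂ) : hA.cpow z * hA.cpow w = hA.cpow (z + w) := by
  rw [cpow, cpow, funCalc_mul_funCalc, cpow]
  congr 1
  funext a
  exact (Real.cpowPos_add a z w).symm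

lemma conjTranspose_cpow (z : ℂ) : (hA.cpow z)ᴴ = hA.cpow (starRingEnd ℂ z) := by
  rw [cpow, conjTranspose_funCalc, cpow]
  congr 1
  funext a
  exact Real.star_cpowPos a z

open scoped Matrix.Norms.L2Operator in
lemma differentiable_cpow : Differentiable ℂ hA.cpow := by
  let diagonalCLM := LinearMap.toContinuousLinearMap (diagonalLinearMap m ℂ ℂ)
  have hdiag : Differentiable ℂ fun z ↦ diagonal ((Real.cpowPos · z) ∘ hA.eigenvalues) :=
    diagonalCLM.differentiable.comp
      (differentiable_pi.2 fun i ↦ Real.differentiable_cpowPos (hA.eigenvalues i))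
  exact ((differentiable_const _).mul hdiag).mul (differentiable_const _)

open scoped Matrix.Norms.L2Operator in
lemma exists_norm_cpow_le : ∃ C, ∀ z : ℂ, 0 ≤ z.re → z.re ≤ 1 → ‖hA.cpow z‖ ≤ C := by
  set U := (hA.eigenvectorUnitary : Matrix m m ℂ)
  refine ⟨‖U‖ * (∑ i, max 1 (hA.eigenvalues i)) * ‖star U‖, fun z h0 h1 ↦ ?_⟩
  have hdiag :
      ‖diagonal ((Real.cpowPos · z) ∘ hA.eigenvalues)‖ ≤ ∑ i, max 1 (hA.eigenvalues i) := by
    rw [l2_opNorm_diagonal]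
    have hmax : ∀ i, 0 ≤ max 1 (hA.eigenvalues i) := fun i ↦ zero_le_one.trans (le_max_left _ _)
    refine (pi_norm_le_iff_of_nonneg (Finset.sum_nonneg fun i _ ↦ hmax i)).2 fun i ↦ ?_
    exact (Real.norm_cpowPos_le _ h0 h1).trans
      (Finset.single_le_sum (fun j _ ↦ hmax j) (Finset.mem_univ i))
  calc ‖hA.cpow z‖ ≤ ‖U‖ * ‖diagonal ((Real.cpowPos · z) ∘ hA.eigenvalues)‖ * ‖star U‖ :=
        (l2_opNorm_mul _ _).trans (mul_le_mul_of_nonneg_right (l2_opNorm_mul _ _) (norm_nonneg _))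
    _ ≤ _ := by gcongr

lemma isHermitian_cpow_half : (hA.cpow (1 / 2)).IsHermitian := by
  rw [IsHermitian, conjTranspose_cpow, map_div₀, map_one, map_ofNat]

end Matrix.IsHermitian

namespace Matrix

variable {m : Type*} [Fintype m] [DecidableEq m] {A B : Matrix m m ℂ}

lemma PosSemidef.cpow_one (hA : A.PosSemidef) : hA.1.cpow 1 = A := by
  conv_rhs => rw [← hA.1.funCalc_ofReal]
  unfold IsHermitian.cpow IsHermitian.funCalc
  congr 3
  funext i
  exact Real.cpowPos_one (hA.eigenvalues_nonneg i)

lemma PosSemidef.cpow_half_mul_self (hA : A.PosSemidef) :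
    hA.1.cpow (1 / 2) * hA.1.cpow (1 / 2) = A := by
  rw [IsHermitian.cpow_mul_cpow, add_halves, hA.cpow_one]

lemma PosSemidef.cpow_ofReal_eq_mpow {n : ℕ} {A : Matrix (Fin n) (Fin n) ℂ} (hA : A.PosSemidef)
    {t : ℝ} (ht : 0 < t) : hA.1.cpow t = A.mpow t := by
  unfold IsHermitian.cpow IsHermitian.funCalc mpow
  rw [dif_pos hA.1]
  congr 3
  funext i
  exact Real.cpowPos_ofReal (hA.eigenvalues_nonneg i) ht

noncomputable def traceCpowProd (hA : A.IsHermitian) (hB : B.IsHermitian) (z : ℂ) : ℂ :=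
  (hA.cpow z * hB.cpow z * hA.cpow (1 - z) * hB.cpow (1 - z)).trace

section Hermitian

variable (hA : A.IsHermitian) (hB : B.IsHermitian)

lemma traceCpowProd_one_sub (z : ℂ) : traceCpowProd hA hB (1 - z) = traceCpowProd hA hB z := by
  simp only [traceCpowProd, sub_sub_cancel, Matrix.mul_assoc]
  rw [← Matrix.mul_assoc, trace_mul_comm, Matrix.mul_assoc]

open scoped Matrix.Norms.L2Operator

lemma differentiable_traceCpowProd : Differentiable ℂ (traceCpowProd hA hB) := by
  have hsub : Differentiable ℂ fun z : ℂ ↦ 1 - z := (differentiable_const 1).sub differentiable_id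
  exact (LinearMap.toContinuousLinearMap (traceLinearMap m ℂ ℂ)).differentiable.comp
    (((hA.differentiable_cpow.mul hB.differentiable_cpow).mul
      (hA.differentiable_cpow.comp hsub)).mul (hB.differentiable_cpow.comp hsub))

lemma exists_norm_traceCpowProd_le :
    ∃ C, ∀ z : ℂ, 0 ≤ z.re → z.re ≤ 1 → ‖traceCpowProd hA hB z‖ ≤ C := by
  obtain ⟨CA, hCA⟩ := hA.exists_norm_cpow_le
  obtain ⟨CB, hCB⟩ := hB.exists_norm_cpow_le
  have hCA0 : 0 ≤ CA := (norm_nonneg _).trans (hCA 0 le_rfl zero_le_one)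
  have hCB0 : 0 ≤ CB := (norm_nonneg _).trans (hCB 0 le_rfl zero_le_one)
  let traceCLM := LinearMap.toContinuousLinearMap (traceLinearMap m ℂ ℂ)
  refine ⟨‖traceCLM‖ * (CA * CB * CA * CB), fun z h0 h1 ↦ ?_⟩
  have h0' : 0 ≤ (1 - z).re := by simpa using h1
  have h1' : (1 - z).re ≤ 1 := by simpa using h0
  calc ‖traceCpowProd hA hB z‖
      ≤ ‖traceCLM‖ * ‖hA.cpow z * hB.cpow z * hA.cpow (1 - z) * hB.cpow (1 - z)‖ :=
        traceCLM.le_opNorm _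
    _ ≤ ‖traceCLM‖ *
          (‖hA.cpow z‖ * ‖hB.cpow z‖ * ‖hA.cpow (1 - z)‖ * ‖hB.cpow (1 - z)‖) := by
        gcongr
        exact (norm_mul_le _ _).trans (by gcongr; exact norm_mul₃_le)
    _ ≤ ‖traceCLM‖ * (CA * CB * CA * CB) := by
        gcongr
        exacts [hCA z h0 h1, hCB z h0 h1, hCA _ h0' h1', hCB _ h0' h1']

end Hermitian

noncomputable def sqrtCommutator (hA : A.PosSemidef) (hB : B.PosSemidef) : Matrix m m ℂ :=
  hA.1.cpow (1 / 2) * hB.1.cpow (1 / 2) - hB.1.cpow (1 / 2) * hA.1.cpow (1 / 2)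

section PosSemidef

variable (hA : A.PosSemidef) (hB : B.PosSemidef)

lemma sqrtCommutator_ne_zero (hAB : A * B ≠ B * A) : sqrtCommutator hA hB ≠ 0 := by
  intro h
  have hcomm : Commute (hA.1.cpow (1 / 2)) (hB.1.cpow (1 / 2)) := sub_eq_zero.1 h
  apply hAB
  simpa only [hA.cpow_half_mul_self, hB.cpow_half_mul_self] using
    ((hcomm.mul_right hcomm).mul_left (hcomm.mul_right hcomm)).eq

lemma re_trace_sqrtCommutator_pos (hAB : A * B ≠ B * A) :
    0 < ((sqrtCommutator hA hB)ᴴ * sqrtCommutator hA hB).trace.re :=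
  (Complex.pos_iff.1 <| (posSemidef_conjTranspose_mul_self _).trace_nonneg.lt_of_ne' <|
    mt trace_conjTranspose_mul_self_eq_zero_iff.1 (sqrtCommutator_ne_zero hA hB hAB)).1

lemma re_trace_cpow_half_word_eq :
    (hA.1.cpow (1 / 2) * hB.1.cpow (1 / 2) * hA.1.cpow (1 / 2) * hB.1.cpow (1 / 2)).trace.re =
      (A * B).trace.re - ((sqrtCommutator hA hB)ᴴ * sqrtCommutator hA hB).trace.re / 2 := by
  have h := trace_commutator_conjTranspose_mul_self hA.1.isHermitian_cpow_half
    hB.1.isHermitian_cpow_half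
  rw [hA.cpow_half_mul_self, hB.cpow_half_mul_self] at h
  rw [sqrtCommutator, h]
  simp only [one_div, Complex.sub_re, Complex.mul_re, Complex.re_ofNat, Complex.im_ofNat,
    zero_mul, sub_zero]
  ring

lemma re_traceCpowProd_le_of_re_eq_quarter {z : ℂ} (hz : z.re = 1 / 4) :
    (traceCpowProd hA.1 hB.1 z).re ≤
      (A * B).trace.re - ((sqrtCommutator hA hB)ᴴ * sqrtCommutator hA hB).trace.re / 4 := by
  have h₁ := two_mul_re_trace_le_of_re_eq_quarter hA.1.cpow_mul_cpow hB.1.cpow_mul_cpow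
    hA.1.conjTranspose_cpow hB.1.conjTranspose_cpow hz
  have h₂ := re_trace_le_of_re_eq_quarter hA.1.cpow_mul_cpow hB.1.cpow_mul_cpow
    hA.1.conjTranspose_cpow hB.1.conjTranspose_cpow hz
  rw [hA.cpow_one, hB.cpow_one] at h₁
  rw [re_trace_cpow_half_word_eq hA hB] at h₂
  rw [traceCpowProd]
  linarith

lemma re_traceCpowProd_le {z : ℂ} (h0 : 1 / 4 ≤ z.re) (h1 : z.re ≤ 3 / 4) :
    (traceCpowProd hA.1 hB.1 z).re ≤
      (A * B).trace.re - ((sqrtCommutator hA hB)ᴴ * sqrtCommutator hA hB).trace.re / 4 := by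
  obtain ⟨C, hC⟩ := exists_norm_traceCpowProd_le hA.1 hB.1
  refine Complex.re_le_of_diffContOnCl_verticalStrip
    (differentiable_traceCpowProd hA.1 hB.1).diffContOnCl ⟨C, ?_⟩
    (fun w hw ↦ re_traceCpowProd_le_of_re_eq_quarter hA hB hw) (fun w hw ↦ ?_) h0 h1
  · rintro _ ⟨w, hw, rfl⟩
    exact (Complex.re_le_norm _).trans (hC w (by linarith [hw.1]) (by linarith [hw.2]))
  · rw [← traceCpowProd_one_sub]
    exact re_traceCpowProd_le_of_re_eq_quarter hA hB (by rw [Complex.sub_re, hw]; norm_num)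

end PosSemidef

lemma traceCpowProd_ofReal {n : ℕ} {A B : Matrix (Fin n) (Fin n) ℂ} (hA : A.PosSemidef)
    (hB : B.PosSemidef) {t : ℝ} (h0 : 0 < t) (h1 : t < 1) :
    traceCpowProd hA.1 hB.1 t = (A.mpow t * B.mpow t * A.mpow (1 - t) * B.mpow (1 - t)).trace := by
  have h1' : 0 < 1 - t := sub_pos.2 h1
  rw [traceCpowProd, ← hA.cpow_ofReal_eq_mpow h0, ← hB.cpow_ofReal_eq_mpow h0,
    ← hA.cpow_ofReal_eq_mpow h1', ← hB.cpow_ofReal_eq_mpow h1', Complex.ofReal_sub,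
    Complex.ofReal_one]

end Matrix

theorem stmt16 {n : ℕ} {A B : Matrix (Fin n) (Fin n) ℂ}
    (hA : A.PosSemidef) (hB : B.PosSemidef) (hAB : A * B ≠ B * A) :
    (∀ t : ℝ, 1 / 4 ≤ t → t ≤ 3 / 4 →
      (A.mpow t * B.mpow t * A.mpow (1 - t) * B.mpow (1 - t)).trace.re <
        (A * B).trace.re) ∧
    ∃ δ : ℝ, 0 < δ ∧ ∀ t : ℝ, 1 / 4 - δ ≤ t → t ≤ 3 / 4 + δ →
      (A.mpow t * B.mpow t * A.mpow (1 - t) * B.mpow (1 - t)).trace.re ≤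
        (A * B).trace.re := by
  set g : ℝ → ℝ := fun t ↦ (traceCpowProd hA.1 hB.1 t).re
  have hg : ∀ t : ℝ, 0 < t → t < 1 →
      (A.mpow t * B.mpow t * A.mpow (1 - t) * B.mpow (1 - t)).trace.re = g t :=
    fun t h0 h1 ↦ congrArg Complex.re (traceCpowProd_ofReal hA hB h0 h1).symm
  have hlt : ∀ t : ℝ, 1 / 4 ≤ t → t ≤ 3 / 4 → g t < (A * B).trace.re := fun t h0 h1 ↦
    (re_traceCpowProd_le hA hB (by simpa using h0) (by simpa using h1)).trans_lt
      (by linarith [re_trace_sqrtCommutator_pos hA hB hAB])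
  refine ⟨fun t h0 h1 ↦ hg t (by linarith) (by linarith) ▸ hlt t h0 h1, ?_⟩
  have hcont : Continuous g := Complex.continuous_re.comp
    ((differentiable_traceCpowProd hA.1 hB.1).continuous.comp Complex.continuous_ofReal)
  obtain ⟨δ, hδ, hsub⟩ := Real.exists_Icc_sub_add_subset_of_isOpen (by norm_num)
    ((isOpen_Ioo (a := 0) (b := 1)).inter (isOpen_lt hcont continuous_const))
    (fun t ht ↦ ⟨⟨by linarith [ht.1], by linarith [ht.2]⟩, hlt t ht.1 ht.2⟩)
  refine ⟨δ, hδ, fun t h0 h1 ↦ ?_⟩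
  obtain ⟨⟨ht0, ht1⟩, hgt⟩ := hsub ⟨h0, h1⟩
  exact (hg t ht0 ht1).trans_le hgt.le
end
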